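/- arXiv:1604.03785 — 2 statements merged into one kernel-verified Lean document; each statement's English description precedes it below -/
import Mathlib

section
/- For a single variable δ and formal power series τ with τ > 0 (or τ invertible), the identity cosh(δ D)(τ ∘ τ) = exp(2 cosh(δ ∂) log τ) holds as an identity of formal power series in δ, where D is the Hirota operator and ∂ the ordinary derivative. -/
open Polynomial

/-- The `n`-th Hirota bilinear derivative
`(Dⁿ f∘g)(t) = (∂_t - ∂_s)ⁿ f(t)g(s)|_{s=t} = Σ_{k=0}^n (-1)^{n-k} C(n,k) f^{(k)} g^{(n-k)}`. -/
noncomputable def hirotaD (f g : Polynomial ℝ) (n : ℕ) : Polynomial ℝ :=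
  ∑ k ∈ Finset.range (n + 1),
    (((-1 : ℝ) ^ (n - k)) * (n.choose k : ℝ)) • (derivative^[k] f * derivative^[n - k] g)

/-! Expanding `f (t + δ)` and `g (t - δ)` by Taylor's formula at `t`, the `m`-th coefficient
(in `δ`) of their product is `(Dᵐ f∘g)(t) / m!`, so `Σ_m δᵐ/m! (Dᵐ f∘g)(t) = f(t + δ) g(t - δ)`.
Since `Dᵐ g∘f = (-1)ᵐ Dᵐ f∘g`, the odd Hirota derivatives of `τ∘τ` vanish and only the even
part `cosh(δD)` survives; finally `exp (log a + log b) = a b` for `a, b > 0`. -/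

open Finset Nat

namespace Polynomial

theorem iterate_derivative_eq_factorial_smul_hasseDeriv {R : Type*} [Semiring R] (k : ℕ)
    (f : R[X]) : derivative^[k] f = k ! • hasseDeriv k f := by
  rw [← factorial_smul_hasseDeriv]; rfl

end Polynomial

theorem Finset.sum_range_two_mul_of_odd_eq_zero {M : Type*} [AddCommMonoid M] (c : ℕ → M)
    (hodd : ∀ n, c (2 * n + 1) = 0) (N : ℕ) :
    ∑ m ∈ range (2 * N), c m = ∑ n ∈ range N, c (2 * n) := by
  induction N with
  | zero => simp
  | succ N ih =>
    rw [Nat.mul_succ, sum_range_succ, sum_range_succ, hodd, add_zero, sum_range_succ, ih]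

section Hirota

variable (f g : ℝ[X])

theorem hirotaD_eq_factorial_smul_sum_antidiagonal (m : ℕ) :
    hirotaD f g m = (m ! : ℝ) •
      ∑ p ∈ antidiagonal m, (-1 : ℝ) ^ p.2 • (hasseDeriv p.1 f * hasseDeriv p.2 g) := by
  rw [hirotaD, Nat.sum_antidiagonal_eq_sum_range_succ
    (fun i j => (-1 : ℝ) ^ j • (hasseDeriv i f * hasseDeriv j g)), smul_sum]
  refine sum_congr rfl fun k hk => ?_
  have hchoose : (m.choose k * k ! * (m - k)! : ℝ) = m ! := by
    exact_mod_cast choose_mul_factorial_mul_factorial (mem_range_succ_iff.mp hk)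
  simp only [iterate_derivative_eq_factorial_smul_hasseDeriv, ← hchoose, smul_mul_smul_comm,
    smul_smul, ← Nat.cast_smul_eq_nsmul ℝ]
  congr 1
  ring

-- `C (-1) * X` plays the role of `-X`, so that `comp_C_mul_X_coeff` computes the coefficients.
theorem hirotaD_eval_eq_factorial_mul_coeff (t : ℝ) (m : ℕ) :
    (hirotaD f g m).eval t = m ! * (taylor t f * (taylor t g).comp (C (-1) * X)).coeff m := by
  simp only [hirotaD_eq_factorial_smul_sum_antidiagonal, coeff_mul, taylor_coeff,
    comp_C_mul_X_coeff, eval_smul, eval_finsetSum, eval_mul, smul_eq_mul, mul_sum]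
  refine sum_congr rfl fun p _ => ?_
  ring

theorem sum_range_hirotaD_eval (t δ : ℝ) {M : ℕ} (hM : f.natDegree + g.natDegree < M) :
    ∑ m ∈ range M, δ ^ m / (m ! : ℝ) * (hirotaD f g m).eval t
      = f.eval (t + δ) * g.eval (t - δ) := by
  set P := taylor t f * (taylor t g).comp (C (-1) * X)
  have hP : P.natDegree < M := by
    refine natDegree_mul_le.trans_lt (lt_of_le_of_lt ?_ hM)
    simp [natDegree_comp, natDegree_taylor]
  have hPeval : P.eval δ = f.eval (t + δ) * g.eval (t - δ) := by
    simp only [P, eval_mul, eval_comp, taylor_eval, eval_C, eval_X]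
    rw [add_comm δ, neg_one_mul, neg_add_eq_sub]
  rw [← hPeval, eval_eq_sum_range' hP]
  refine sum_congr rfl fun m _ => ?_
  rw [hirotaD_eval_eq_factorial_mul_coeff]
  field_simp
  rfl

theorem hirotaD_swap (m : ℕ) : hirotaD g f m = (-1 : ℝ) ^ m • hirotaD f g m := by
  rw [hirotaD_eq_factorial_smul_sum_antidiagonal, hirotaD_eq_factorial_smul_sum_antidiagonal,
    smul_comm _ (m ! : ℝ), ← Nat.sum_antidiagonal_swap]
  congr 1
  rw [smul_sum]
  refine sum_congr rfl fun p hp => ?_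
  rw [HasAntidiagonal.mem_antidiagonal] at hp
  rw [Prod.fst_swap, Prod.snd_swap, mul_comm, smul_smul, ← hp, pow_add, mul_assoc, ← mul_pow,
    neg_one_mul, neg_neg, one_pow, mul_one]

theorem hirotaD_self_eq_zero_of_odd {m : ℕ} (hm : Odd m) : hirotaD f f m = 0 := by
  have := hirotaD_swap f f m
  rwa [hm.neg_one_pow, neg_one_smul, self_eq_neg] at this

end Hirota

/-- `cosh(δD)(τ∘τ) = exp(2 cosh(δ∂) log τ)`: the (terminating) series
`Σ_n δ^{2n}/(2n)! (D^{2n} τ∘τ)(t)` equals `exp(2·½(log τ(t+δ) + log τ(t-δ)))`,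
for `τ` positive at the relevant points. -/
theorem cosh_hirota_identity (τ : Polynomial ℝ) (δ t : ℝ) (N : ℕ)
    (hN : τ.natDegree ≤ N)
    (h1 : 0 < τ.eval (t + δ)) (h2 : 0 < τ.eval (t - δ)) :
    ∑ n ∈ Finset.range (N + 1),
        (δ ^ (2 * n) / ((2 * n).factorial : ℝ)) * (hirotaD τ τ (2 * n)).eval t
      = Real.exp (2 * ((Real.log (τ.eval (t + δ)) + Real.log (τ.eval (t - δ))) / 2)) := by
  rw [mul_div_cancel₀ _ two_ne_zero, Real.exp_add, Real.exp_log h1, Real.exp_log h2,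
    ← sum_range_hirotaD_eval τ τ t δ (M := 2 * (N + 1)) (by omega)]
  refine (sum_range_two_mul_of_odd_eq_zero
    (fun m => δ ^ m / (m ! : ℝ) * (hirotaD τ τ m).eval t) (fun n => ?_) _).symm
  rw [hirotaD_self_eq_zero_of_odd τ (odd_two_mul_add_one n), eval_zero, mul_zero]
end

section
/- For formal pseudo-differential operators P and Q in one variable x, res_∂(P·Q*) = res_λ (P e^{xλ})·(Q e^{−xλ}), where res_∂ extracts the coefficient of ∂^{−1}, Q* is the formal adjoint, P e^{xλ} = (Σ a_i(x) λ^i) e^{xλ} is the symbol action on the exponential, and res_λ extracts the coefficient of λ^{−1} of the resulting Laurent series in λ. -/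
/-!
By the Leibniz rule, the coefficient of `∂^{-1}` in `∂^i ∘ Q*` receives from `b_j ∂^j` the
factor `(-1)^j Σ_k C(i,k) C(j,t-k) d^t(b_j)` with `t = i + j + 1`. Chu–Vandermonde turns the sum
into `C(t-1, t)`, which vanishes unless `t = 0`; so only `j = -1 - i` survives, undifferentiated.
-/

open scoped BigOperators

namespace PdoPaper

/-- Generalized binomial coefficient `C(i, k)` for an integer upper index `i`, as a rational:
`C(i,k) = i(i-1)⋯(i-k+1)/k!`. -/
noncomputable def zchoose (i : ℤ) (k : ℕ) : ℚ :=
  (∏ j ∈ Finset.range k, ((i : ℚ) - (j : ℚ))) / (Nat.factorial k : ℚ)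

/-- A formal pseudo-differential operator `P = Σ_{i ≤ bound} (coeff i) ∂^i` over a ring `R`:
a coefficient function `coeff : ℤ → R` vanishing above the bound. -/
structure PDO (R : Type) [CommRing R] [Algebra ℚ R] where
  coeff : ℤ → R
  bound : ℤ
  coeff_eq_zero : ∀ i : ℤ, bound < i → coeff i = 0

namespace PDO

variable {R : Type} [CommRing R] [Algebra ℚ R] (d : R → R)

/-- Multiplication of pseudo-differential operators, determined by the rule
`∂^i ∘ a = Σ_{k≥0} C(i,k) d^k(a) ∂^{i-k}` (`d` is the derivation of the coefficient ring).
The coefficient of `∂^m` in `P·Q` is `Σ_{i,k} C(i,k) · (P.coeff i) · d^k(Q.coeff (m-i+k))`. -/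
noncomputable def mul (P Q : PDO R) : PDO R where
  coeff m := ∑ i ∈ Finset.Icc (m - Q.bound) P.bound,
    ∑ k ∈ Finset.range ((Q.bound - m + i).toNat + 1),
      zchoose i k • (P.coeff i * d^[k] (Q.coeff (m - i + k)))
  bound := P.bound + Q.bound
  coeff_eq_zero := by
    intro m hm
    try dsimp only
    rw [Finset.Icc_eq_empty (by omega : ¬ (m - Q.bound ≤ P.bound))]
    simp

/-- The formal adjoint, determined by `(a ∂^i)* = (-∂)^i ∘ a`; its coefficient of `∂^m` is
`Σ_{i ≥ m} (-1)^i C(i, i-m) d^{i-m}(P.coeff i)`. -/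
noncomputable def adj (P : PDO R) : PDO R where
  coeff m := ∑ i ∈ Finset.Icc m P.bound,
      (((-1 : ℚ) ^ i) * zchoose i (i - m).toNat) • d^[(i - m).toNat] (P.coeff i)
  bound := P.bound
  coeff_eq_zero := by
    intro m hm
    try dsimp only
    rw [Finset.Icc_eq_empty (by omega : ¬ (m ≤ P.bound))]
    simp

/-- The residue of a pseudo-differential operator: the coefficient of `∂^{-1}`. -/
def res (P : PDO R) : R := P.coeff (-1)

/-- The pseudo-differential operator `∂^m` (`m ∈ ℤ`). -/
def delPow (m : ℤ) : PDO R where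
  coeff i := if i = m then 1 else 0
  bound := m
  coeff_eq_zero := by
    intro i h
    try dsimp only
    simp [show i ≠ m by omega]

/-- The multiplication operator by a function `f` (i.e. `f ∂^0`). -/
def ofFun (f : R) : PDO R where
  coeff i := if i = 0 then f else 0
  bound := 0
  coeff_eq_zero := by
    intro i h
    try dsimp only
    simp [show i ≠ 0 by omega]

/-- Difference of pseudo-differential operators. -/
def sub (P Q : PDO R) : PDO R where
  coeff i := P.coeff i - Q.coeff i
  bound := max P.bound Q.bound
  coeff_eq_zero := by
    intro i h
    try dsimp only
    rw [P.coeff_eq_zero i ((le_max_left _ _).trans_lt h),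
      Q.coeff_eq_zero i ((le_max_right _ _).trans_lt h), sub_self]

/-- `n`-th power of a pseudo-differential operator. -/
noncomputable def npow (P : PDO R) : ℕ → PDO R
  | 0 => delPow 0
  | n + 1 => mul d (npow P n) P

/-- The differential-operator (non-negative) part `P₊`. -/
def posPart (P : PDO R) : PDO R where
  coeff i := if 0 ≤ i then P.coeff i else 0
  bound := P.bound
  coeff_eq_zero := by
    intro i h
    try dsimp only
    rw [P.coeff_eq_zero i h]
    simp

/-- The strictly negative part `P₋`. -/
def negPart (P : PDO R) : PDO R where
  coeff i := if i < 0 then P.coeff i else 0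
  bound := -1
  coeff_eq_zero := by
    intro i h
    try dsimp only
    simp [show ¬ i < 0 by omega]

/-- Application of (the differential-operator part of) a pseudo-differential operator
to a function `f` of the coefficient ring: `(Σ_{i≥0} a_i ∂^i)(f) = Σ_{i≥0} a_i d^i(f)`. -/
noncomputable def app (P : PDO R) (f : R) : R :=
  ∑ i ∈ Finset.range (P.bound.toNat + 1), P.coeff (i : ℤ) * d^[i] f

end PDO

end PdoPaper

namespace PdoPaper

open Polynomial in
theorem zchoose_eq_choose (i : ℤ) (k : ℕ) : zchoose i k = Ring.choose (i : ℚ) k := by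
  rw [Ring.choose_eq_smul, ← aeval_eq_smeval, aeval_def, ← eval_map, descPochhammer_map,
    descPochhammer_eval_eq_prod_range, zchoose, smul_eq_mul, div_eq_inv_mul]

theorem sum_range_zchoose_mul_zchoose (i j : ℤ) (t : ℕ) :
    ∑ k ∈ Finset.range (t + 1), zchoose i k * zchoose j (t - k) = zchoose (i + j) t := by
  simp only [zchoose_eq_choose, Int.cast_add,
    Ring.add_choose_eq t (Commute.all (i : ℚ) j), Finset.Nat.sum_antidiagonal_eq_sum_range_succ_mk]

theorem zchoose_sub_one_self (t : ℕ) : zchoose (t - 1) t = if t = 0 then 1 else 0 := by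
  rcases Nat.eq_zero_or_pos t with rfl | ht
  · simp [zchoose]
  have hcast : (((t : ℤ) - 1 : ℤ) : ℚ) = ((t - 1 : ℕ) : ℚ) := by push_cast [ht]; ring
  rw [zchoose_eq_choose, if_neg ht.ne', hcast, Ring.choose_natCast,
    Nat.choose_eq_zero_of_lt (by omega), Nat.cast_zero]

theorem iterate_sum_smul {M ι : Type*} [AddCommGroup M] [Module ℚ M] {d : M → M}
    (hd_add : ∀ a b, d (a + b) = d a + d b) (k : ℕ) (s : Finset ι) (c : ι → ℚ) (f : ι → M) :
    d^[k] (∑ j ∈ s, c j • f j) = ∑ j ∈ s, c j • d^[k] (f j) := by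
  let D : AddMonoid.End M := AddMonoidHom.mk' d hd_add
  have hD : d^[k] = ⇑(D ^ k) := (AddMonoid.End.coe_pow _ D k).symm
  simp only [hD, map_sum, map_rat_smul]

namespace PDO

theorem sum_zchoose_smul_iterate_coeff_adj {R : Type} [CommRing R] [Algebra ℚ R] {d : R → R}
    (hd_add : ∀ a b : R, d (a + b) = d a + d b)
    (Q : PDO R) {i : ℤ} (hi : -1 - Q.bound ≤ i) :
    ∑ k ∈ Finset.range (((adj d Q).bound - -1 + i).toNat + 1),
      zchoose i k • d^[k] ((adj d Q).coeff (-1 - i + k)) =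
      ((-1 : ℚ) ^ (-1 - i)) • Q.coeff (-1 - i) := by
  simp only [adj, iterate_sum_smul hd_add, Finset.smul_sum, smul_smul,
    ← Function.iterate_add_apply]
  rw [Finset.sum_comm' (t' := Finset.Icc (-1 - i) Q.bound)
    (s' := fun j => Finset.range ((j + 1 + i).toNat + 1))
    (fun k j => by simp only [Finset.mem_range, Finset.mem_Icc]; omega)]
  have hterm : ∀ j ∈ Finset.Icc (-1 - i) Q.bound,
      ∑ k ∈ Finset.range ((j + 1 + i).toNat + 1),
        (zchoose i k * ((-1) ^ j * zchoose j (j - (-1 - i + k)).toNat)) •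
          d^[k + (j - (-1 - i + k)).toNat] (Q.coeff j) =
      if j = -1 - i then ((-1 : ℚ) ^ j) • Q.coeff j else 0 := by
    intro j hj
    obtain ⟨t, ht⟩ : ∃ t : ℕ, j + 1 + i = t :=
      ⟨_, (Int.toNat_of_nonneg (by rw [Finset.mem_Icc] at hj; omega)).symm⟩
    calc _ = ∑ k ∈ Finset.range (t + 1),
          (zchoose i k * zchoose j (t - k)) • ((-1 : ℚ) ^ j • d^[t] (Q.coeff j)) := by
          rw [ht, Int.toNat_natCast]
          refine Finset.sum_congr rfl fun k hk => ?_
          rw [Finset.mem_range] at hk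
          rw [show (j - (-1 - i + k)).toNat = t - k by omega, Nat.add_sub_cancel' (by omega),
            smul_smul]
          ring_nf
      _ = zchoose (t - 1) t • ((-1 : ℚ) ^ j • d^[t] (Q.coeff j)) := by
          rw [← Finset.sum_smul, sum_range_zchoose_mul_zchoose, show i + j = t - 1 by omega]
      _ = _ := by
          rw [zchoose_sub_one_self]
          by_cases h : t = 0
          · simp [h, show j = -1 - i by omega]
          · simp [h, show j ≠ -1 - i by omega]
  rw [Finset.sum_congr rfl hterm, Finset.sum_ite_eq', if_pos (Finset.mem_Icc.2 ⟨le_rfl, by omega⟩)]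

end PDO

end PdoPaper

open PdoPaper PdoPaper.PDO in
/-- Since `P e^{xλ} = (Σ_i a_i λ^i) e^{xλ}` and `Q e^{-xλ} = (Σ_j b_j (-λ)^j) e^{-xλ}`,
`res_λ (P e^{xλ})·(Q e^{-xλ})` is the coefficient of `λ^{-1}` in `(Σ_i a_i λ^i)(Σ_j b_j (-λ)^j)`,
namely the finite sum `Σ_i (-1)^{-1-i} a_i b_{-1-i}`. -/
theorem dickey_residue_lemma_general {R : Type} [CommRing R] [Algebra ℚ R] (d : R → R)
    (hd_add : ∀ a b : R, d (a + b) = d a + d b)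
    (P Q : PDO R) :
    res (mul d P (adj d Q)) =
      ∑ i ∈ Finset.Icc (-1 - Q.bound) P.bound,
        ((-1 : ℚ) ^ (-1 - i)) • (P.coeff i * Q.coeff (-1 - i)) := by
  simp only [res, mul]
  refine Finset.sum_congr rfl fun i hi => ?_
  simp only [← mul_smul_comm, ← Finset.mul_sum]
  rw [sum_zchoose_smul_iterate_coeff_adj hd_add Q (Finset.mem_Icc.1 hi).1, mul_smul_comm]

open PdoPaper PdoPaper.PDO in
/-- Dickey's residue lemma: for pseudo-differential operators `P`, `Q`,
`res_∂ (P · Q*) = res_λ (P e^{xλ})·(Q e^{-xλ})`.  Since `P e^{xλ} = (Σ_i a_i λ^i) e^{xλ}` and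
`Q e^{-xλ} = (Σ_j b_j (-λ)^j) e^{-xλ}`, the right-hand side is the coefficient of `λ^{-1}` in
`(Σ_i a_i λ^i)(Σ_j b_j (-λ)^j)`, namely `Σ_i (-1)^{-1-i} a_i b_{-1-i}` (a finite sum). -/
theorem dickey_residue_lemma {R : Type} [CommRing R] [Algebra ℚ R] (d : R → R)
    (hd_add : ∀ a b : R, d (a + b) = d a + d b)
    (hd_mul : ∀ a b : R, d (a * b) = d a * b + a * d b)
    (P Q : PDO R) :
    res (mul d P (adj d Q)) =
      ∑ i ∈ Finset.Icc (-1 - Q.bound) P.bound,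
        ((-1 : ℚ) ^ (-1 - i)) • (P.coeff i * Q.coeff (-1 - i)) :=
  dickey_residue_lemma_general d hd_add P Q
end
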